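/- Let A be a k×n real matrix with orthonormal rows, and let L = diag(ℓ_1,…,ℓ_n) with all ℓ_j > 0. Then the operator norm of (A L² Aᵀ)^{-1/2} satisfies ‖(A L² Aᵀ)^{-1/2}‖_op ≤ ∑_{j=1}^n (∑_{i=1}^k a_{j,i}²) ℓ_j^{-1}, where a_{j,i} denotes the (i,j) entry of A. -/

import Mathlib

/-!
For a vector `y` put `c j = (y ᵥ* A) j ^ 2`. Orthonormality of the rows gives `∑ c = |y|²`, and
`|S y|² = ⟪S² y, y⟫ = ∑ c ℓ²`. Hölder's inequality (equivalently, Jensen for `t ↦ t^(-1/2)`) gives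
`(∑ c)³ ≤ (∑ c ℓ⁻¹)² ∑ c ℓ²`, while Cauchy–Schwarz gives `c j ≤ (∑ i, A i j ^ 2) |y|²`, so that
`∑ c ℓ⁻¹ ≤ C |y|²` where `C = tr (A L⁻¹ Aᵀ)` is the claimed bound. Hence `|y|² ≤ C² |S y|²`,
which is `‖S⁻¹‖ ≤ C`.
-/

open Matrix

theorem Finset.sum_pow_three_le_sq_sum_mul_inv_mul_sum_mul_sq {ι 𝕜 : Type*} [Field 𝕜]
    [LinearOrder 𝕜] [IsStrictOrderedRing 𝕜] (s : Finset ι) {c ℓ : ι → 𝕜}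
    (hc : ∀ i ∈ s, 0 ≤ c i) (hℓ : ∀ i ∈ s, 0 < ℓ i) :
    (∑ i ∈ s, c i) ^ 3 ≤ (∑ i ∈ s, c i * (ℓ i)⁻¹) ^ 2 * ∑ i ∈ s, c i * ℓ i ^ 2 := by
  -- Two Cauchy–Schwarz steps through the intermediate moment `∑ c ℓ`.
  have h₁ : (∑ i ∈ s, c i) ^ 2 ≤ (∑ i ∈ s, c i * ℓ i) * ∑ i ∈ s, c i * (ℓ i)⁻¹ :=
    sum_sq_le_sum_mul_sum_of_sq_le_mul s
      (fun i hi => mul_nonneg (hc i hi) (hℓ i hi).le)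
      (fun i hi => mul_nonneg (hc i hi) (inv_nonneg.2 (hℓ i hi).le))
      (fun i hi => le_of_eq (by field_simp [(hℓ i hi).ne']))
  have h₂ : (∑ i ∈ s, c i * ℓ i) ^ 2 ≤ (∑ i ∈ s, c i) * ∑ i ∈ s, c i * ℓ i ^ 2 :=
    sum_sq_le_sum_mul_sum_of_sq_le_mul s hc
      (fun i hi => mul_nonneg (hc i hi) (sq_nonneg _))
      (fun i _ => le_of_eq (by ring))
  set N := ∑ i ∈ s, c i
  set P := ∑ i ∈ s, c i * ℓ i
  set R := ∑ i ∈ s, c i * (ℓ i)⁻¹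
  set Q := ∑ i ∈ s, c i * ℓ i ^ 2
  have hN : 0 ≤ N := sum_nonneg hc
  have hR : 0 ≤ R := sum_nonneg fun i hi => mul_nonneg (hc i hi) (inv_nonneg.2 (hℓ i hi).le)
  have hQ : 0 ≤ Q := sum_nonneg fun i hi => mul_nonneg (hc i hi) (sq_nonneg _)
  have h₄ : N ^ 4 ≤ N * (R ^ 2 * Q) := calc
    N ^ 4 = (N ^ 2) ^ 2 := by ring
    _ ≤ (P * R) ^ 2 := pow_le_pow_left₀ (sq_nonneg N) h₁ 2
    _ = P ^ 2 * R ^ 2 := by ring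
    _ ≤ N * Q * R ^ 2 := mul_le_mul_of_nonneg_right h₂ (sq_nonneg R)
    _ = N * (R ^ 2 * Q) := by ring
  rcases hN.eq_or_lt with hN0 | hNpos
  · rw [← hN0, zero_pow three_ne_zero]
    positivity
  · nlinarith [pow_pos hNpos 3]

namespace Matrix

variable {κ ι R : Type*} [Fintype κ]

theorem vecMul_dotProduct_vecMul_self [Fintype ι] [CommSemiring R] [DecidableEq κ]
    {A : Matrix κ ι R} (hA : A * Aᵀ = 1) (y : κ → R) :
    y ᵥ* A ⬝ᵥ y ᵥ* A = y ⬝ᵥ y := by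
  rw [← dotProduct_mulVec, ← mulVec_transpose, mulVec_mulVec, hA, one_mulVec]

theorem dotProduct_mul_diagonal_mul_transpose_mulVec [Fintype ι] [CommSemiring R]
    [DecidableEq ι] (A : Matrix κ ι R) (d : ι → R) (y : κ → R) :
    y ⬝ᵥ (A * diagonal d * Aᵀ) *ᵥ y = ∑ j, d j * (y ᵥ* A) j ^ 2 := by
  rw [← mulVec_mulVec, mulVec_transpose, ← mulVec_mulVec, dotProduct_mulVec]
  simp only [dotProduct, mulVec_diagonal]
  exact Finset.sum_congr rfl fun j _ => by ring

theorem mulVec_dotProduct_mulVec_self_of_isSymm [CommSemiring R] {S : Matrix κ κ R}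
    (hS : S.IsSymm) (y : κ → R) : S *ᵥ y ⬝ᵥ S *ᵥ y = y ⬝ᵥ (S * S) *ᵥ y := by
  rw [dotProduct_mulVec, ← mulVec_transpose, hS.eq, mulVec_mulVec, dotProduct_comm]

theorem vecMul_apply_sq_le [CommRing R] [LinearOrder R] [IsStrictOrderedRing R]
    (A : Matrix κ ι R) (y : κ → R) (j : ι) :
    (y ᵥ* A) j ^ 2 ≤ (∑ i, A i j ^ 2) * (y ⬝ᵥ y) := by
  simpa [vecMul, dotProduct, mul_comm, sq] using
    Finset.sum_mul_sq_le_sq_mul_sq Finset.univ (fun i => A i j) y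

theorem dotProduct_self_le_sq_mul_dotProduct_mulVec_self [Fintype ι] [Field R] [LinearOrder R]
    [IsStrictOrderedRing R] [DecidableEq κ] [DecidableEq ι] {A : Matrix κ ι R}
    (hA : A * Aᵀ = 1) {ℓ : ι → R} (hℓ : ∀ j, 0 < ℓ j) {S : Matrix κ κ R} (hSsymm : S.IsSymm)
    (hS : S * S = A * diagonal ℓ ^ 2 * Aᵀ) (y : κ → R) :
    y ⬝ᵥ y ≤ (∑ j, (∑ i, A i j ^ 2) * (ℓ j)⁻¹) ^ 2 * (S *ᵥ y ⬝ᵥ S *ᵥ y) := by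
  set C := ∑ j, (∑ i, A i j ^ 2) * (ℓ j)⁻¹
  set c : ι → R := fun j => (y ᵥ* A) j ^ 2
  have hN : ∑ j, c j = y ⬝ᵥ y := by
    rw [← vecMul_dotProduct_vecMul_self hA]
    simp only [c, dotProduct, sq]
  have hq : S *ᵥ y ⬝ᵥ S *ᵥ y = ∑ j, c j * ℓ j ^ 2 := by
    rw [mulVec_dotProduct_mulVec_self_of_isSymm hSsymm, hS, diagonal_pow,
      dotProduct_mul_diagonal_mul_transpose_mulVec]
    exact Finset.sum_congr rfl fun j _ => mul_comm _ _
  have hR0 : 0 ≤ ∑ j, c j * (ℓ j)⁻¹ :=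
    Finset.sum_nonneg fun j _ => mul_nonneg (sq_nonneg _) (inv_nonneg.2 (hℓ j).le)
  have hR : ∑ j, c j * (ℓ j)⁻¹ ≤ C * (y ⬝ᵥ y) := by
    rw [Finset.sum_mul]
    refine Finset.sum_le_sum fun j _ => ?_
    rw [mul_right_comm]
    exact mul_le_mul_of_nonneg_right (vecMul_apply_sq_le A y j) (inv_nonneg.2 (hℓ j).le)
  have hq0 : 0 ≤ S *ᵥ y ⬝ᵥ S *ᵥ y :=
    hq ▸ Finset.sum_nonneg fun j _ => mul_nonneg (sq_nonneg _) (sq_nonneg _)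
  have holder := Finset.sum_pow_three_le_sq_sum_mul_inv_mul_sum_mul_sq Finset.univ
    (c := c) (fun j _ => sq_nonneg _) (fun j _ => hℓ j)
  rw [hN, ← hq] at holder
  have hcube : (y ⬝ᵥ y) ^ 3 ≤ (y ⬝ᵥ y) ^ 2 * (C ^ 2 * (S *ᵥ y ⬝ᵥ S *ᵥ y)) := by
    have := mul_le_mul_of_nonneg_right (pow_le_pow_left₀ hR0 hR 2) hq0
    linarith
  by_contra! hlt
  have hX : 0 ≤ C ^ 2 * (S *ᵥ y ⬝ᵥ S *ᵥ y) := mul_nonneg (sq_nonneg C) hq0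
  nlinarith [mul_pos (pow_pos (hX.trans_lt hlt) 2) (sub_pos.2 hlt)]

theorem norm_toEuclideanCLM_inv_le [DecidableEq κ] {S : Matrix κ κ ℝ} (hS : IsUnit S.det)
    {C : ℝ} (hC : 0 ≤ C) (h : ∀ y, y ⬝ᵥ y ≤ C ^ 2 * (S *ᵥ y ⬝ᵥ S *ᵥ y)) :
    ‖toEuclideanCLM (𝕜 := ℝ) S⁻¹‖ ≤ C := by
  have norm_sq (y : κ → ℝ) : ‖WithLp.toLp 2 y‖ ^ 2 = y ⬝ᵥ y := by
    rw [EuclideanSpace.real_norm_sq_eq]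
    simp [dotProduct, sq]
  refine ContinuousLinearMap.opNorm_le_bound _ hC fun x => ?_
  obtain ⟨v, rfl⟩ : ∃ v, x = WithLp.toLp 2 (S *ᵥ v) :=
    ⟨S⁻¹ *ᵥ WithLp.ofLp x, by rw [mulVec_mulVec, mul_nonsing_inv S hS, one_mulVec]⟩
  rw [toEuclideanCLM_toLp, mulVec_mulVec, nonsing_inv_mul S hS, one_mulVec,
    ← pow_le_pow_iff_left₀ (norm_nonneg _) (by positivity) two_ne_zero, mul_pow, norm_sq, norm_sq]
  exact h v

end Matrix

theorem opNorm_inv_sqrt_ALLAT_le_general (k n : ℕ) (A : Matrix (Fin k) (Fin n) ℝ)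
    (hA : A * Aᵀ = 1) (ℓ : Fin n → ℝ) (hℓ : ∀ j, 0 < ℓ j)
    (S : Matrix (Fin k) (Fin k) ℝ) (hSpos : S.PosDef)
    (hS : S * S = A * (Matrix.diagonal ℓ) ^ 2 * Aᵀ) :
    ‖Matrix.toEuclideanCLM (𝕜 := ℝ) S⁻¹‖ ≤ ∑ j, (∑ i, (A i j) ^ 2) * (ℓ j)⁻¹ := by
  have hSsymm : S.IsSymm := isHermitian_iff_isSymm.mp hSpos.isHermitian
  have hC : 0 ≤ ∑ j, (∑ i, A i j ^ 2) * (ℓ j)⁻¹ :=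
    Finset.sum_nonneg fun j _ => mul_nonneg (by positivity) (inv_nonneg.2 (hℓ j).le)
  exact norm_toEuclideanCLM_inv_le hSpos.det_pos.ne'.isUnit hC
    (dotProduct_self_le_sq_mul_dotProduct_mulVec_self hA hℓ hSsymm hS)

/-- Let `A` be a `k×n` real matrix with orthonormal rows and `L = diag(ℓ)` with all
`ℓ_j > 0`. If `S` is the (symmetric positive definite) square root of `A L² Aᵀ`, then
`‖S⁻¹‖_op ≤ ∑_j (∑_i a_{j,i}²) ℓ_j⁻¹`, where the operator norm is the Euclidean one. -/
theorem opNorm_inv_sqrt_ALLAT_le (k n : ℕ) (A : Matrix (Fin k) (Fin n) ℝ)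
    (hA : A * Aᵀ = 1) (ℓ : Fin n → ℝ) (hℓ : ∀ j, 0 < ℓ j)
    (S : Matrix (Fin k) (Fin k) ℝ) (hSsymm : S.IsSymm) (hSpos : S.PosDef)
    (hS : S * S = A * (Matrix.diagonal ℓ) ^ 2 * Aᵀ) :
    ‖Matrix.toEuclideanCLM (𝕜 := ℝ) S⁻¹‖ ≤ ∑ j, (∑ i, (A i j) ^ 2) * (ℓ j)⁻¹ :=
  opNorm_inv_sqrt_ALLAT_le_general k n A hA ℓ hℓ S hSpos hS
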